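/- arXiv:0909.0882 — 5 statements merged into one kernel-verified Lean document; each statement's English description precedes it below -/
import Mathlib

section
/- If f : X → X is a continuous map on a compact metric space and I is a compact set, then Inv(I) equals the intersection over m ≥ 0 of the sets Inv^m(I) = {x : there is an orbit segment (xᵢ)_{i=-m}^{m} with x₀ = x and xᵢ ∈ I for all |i| ≤ m}. -/
/-!
A point of `⋂ m, Inv^m I` carries, for every `m`, an orbit segment of length `2m+1` in `I`
through it. Padding such a segment by the point itself turns it into an element of the
compact space `I^ℤ`; the padded segments of length `2m+1` form a decreasing sequence of
nonempty closed sets, and any sequence in their intersection is a full orbit in `I`.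
-/

open Set

/-- A full (bi-infinite) orbit of `f`. -/
def IsOrbit {X : Type*} (f : X → X) (x : ℤ → X) : Prop := ∀ i, f (x i) = x (i + 1)

/-- The maximal invariant subset of `I`. -/
def InvSet {X : Type*} (f : X → X) (I : Set X) : Set X :=
  {p | ∃ x : ℤ → X, IsOrbit f x ∧ x 0 = p ∧ ∀ i, x i ∈ I}

/-- `Inv^m I`: points admitting an orbit segment `(x_i)_{i=-m}^m` in `I` with `x_0 = x`. -/
def InvM {X : Type*} (f : X → X) (I : Set X) (m : ℕ) : Set X :=
  {p | ∃ x : ℤ → X, x 0 = p ∧ (∀ i : ℤ, -(m : ℤ) ≤ i → i < (m : ℤ) → f (x i) = x (i + 1)) ∧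
    ∀ i : ℤ, |i| ≤ (m : ℤ) → x i ∈ I}

section

variable {X : Type*} {f : X → X} {I : Set X}

theorem invSet_subset_invM (m : ℕ) : InvSet f I ⊆ InvM f I m :=
  fun _ ⟨x, hx, hx0, hxI⟩ => ⟨x, hx0, fun i _ _ => hx i, fun i _ => hxI i⟩

def paddedSegments (f : X → X) (I : Set X) (p : X) (m : ℕ) : Set (ℤ → X) :=
  {x | x 0 = p ∧ (∀ i, x i ∈ I) ∧ ∀ i : ℤ, -(m : ℤ) ≤ i → i < m → f (x i) = x (i + 1)}

theorem paddedSegments_succ_subset (p : X) (m : ℕ) :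
    paddedSegments f I p (m + 1) ⊆ paddedSegments f I p m :=
  fun _ ⟨hx0, hxI, hx⟩ =>
    ⟨hx0, hxI, fun i h₁ h₂ => hx i (by push_cast; omega) (by push_cast; omega)⟩

theorem paddedSegments_nonempty {p : X} {m : ℕ} (hp : p ∈ InvM f I m) :
    (paddedSegments f I p m).Nonempty := by
  obtain ⟨x, hx0, hx, hxI⟩ := hp
  have hpI : p ∈ I := hx0 ▸ hxI 0 (by simp)
  refine ⟨fun i => if |i| ≤ m then x i else p, by simp [hx0], fun i => ?_, fun i h₁ h₂ => ?_⟩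
  · dsimp only
    split_ifs with hi
    exacts [hxI i hi, hpI]
  · dsimp only
    rw [if_pos (abs_le.2 ⟨h₁, h₂.le⟩), if_pos (abs_le.2 ⟨by omega, by omega⟩)]
    exact hx i h₁ h₂

variable [TopologicalSpace X] [T2Space X]

theorem isClosed_paddedSegments (hf : Continuous f) (hI : IsClosed I) (p : X)
    (m : ℕ) : IsClosed (paddedSegments f I p m) := by
  simp only [paddedSegments, ofPred_and, ofPred_forall]
  exact (isClosed_eq (continuous_apply 0) continuous_const).inter
    ((isClosed_iInter fun i => hI.preimage (continuous_apply i)).inter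
      (isClosed_iInter fun i => isClosed_iInter fun _ => isClosed_iInter fun _ =>
        isClosed_eq (hf.comp (continuous_apply i)) (continuous_apply (i + 1))))

theorem isCompact_paddedSegments (hf : Continuous f) (hI : IsCompact I) (p : X)
    (m : ℕ) : IsCompact (paddedSegments f I p m) :=
  (isCompact_univ_pi fun _ => hI).of_isClosed_subset (isClosed_paddedSegments hf hI.isClosed p m)
    fun _ ⟨_, hxI, _⟩ i _ => hxI i

theorem iInter_invM_subset_invSet (hf : Continuous f) (hI : IsCompact I) :
    ⋂ m : ℕ, InvM f I m ⊆ InvSet f I := by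
  intro p hp
  rw [mem_iInter] at hp
  obtain ⟨x, hx⟩ := IsCompact.nonempty_iInter_of_sequence_nonempty_isCompact_isClosed _
    (paddedSegments_succ_subset p) (fun m => paddedSegments_nonempty (hp m))
    (isCompact_paddedSegments hf hI p 0) (isClosed_paddedSegments hf hI.isClosed p)
  rw [mem_iInter] at hx
  exact ⟨x, fun i => (hx (i.natAbs + 1)).2.2 i (by omega) (by omega), (hx 0).1, (hx 0).2.1⟩

end

theorem stmt1_general {X : Type*} [MetricSpace X] {f : X → X}
    (hf : Continuous f) {I : Set X} (hI : IsCompact I) :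
    InvSet f I = ⋂ m : ℕ, InvM f I m :=
  (iInter_invM_subset_invSet hf hI).antisymm' (subset_iInter invSet_subset_invM)

theorem stmt1 {X : Type*} [MetricSpace X] [CompactSpace X] {f : X → X}
    (hf : Continuous f) {I : Set X} (hI : IsCompact I) :
    InvSet f I = ⋂ m : ℕ, InvM f I m :=
  stmt1_general hf hI
end

section
/- Let f : X → X be a homeomorphism of a compact metric space. If the diagonal 1_X = {(x,x) : x ∈ X} is an isolated invariant set for f × f : X × X → X × X, then f is expansive in the metric sense: there exists ρ > 0 such that for all distinct x, y ∈ X there is n ∈ ℤ with d(fⁿ(x), fⁿ(y)) > ρ. -/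
open Set

/-- The diagonal of `X × X`. -/
def diagSet (X : Type*) : Set (X × X) := {p : X × X | p.1 = p.2}

/-!
On a compact space the isolating neighbourhood of the diagonal contains a whole band
`{(x, y) | dist x y < ε}`. If two distinct points stayed `ε / 2`-close along their entire orbits,
the orbit of the pair under `f × f` would stay in that band, so the pair would belong to the
maximal invariant set, which is the diagonal.
-/

open Topology

theorem isOrbit_zpow_apply {X : Type*} (e : Equiv.Perm X) (x : X) :
    IsOrbit e (fun n : ℤ => (e ^ n) x) := fun i => by
  show e ((e ^ i) x) = (e ^ (i + 1)) x
  rw [add_comm, zpow_add, zpow_one, Equiv.Perm.mul_apply]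

theorem IsOrbit.prodMap {X Y : Type*} {f : X → X} {g : Y → Y} {x : ℤ → X} {y : ℤ → Y}
    (hx : IsOrbit f x) (hy : IsOrbit g y) : IsOrbit (Prod.map f g) (fun i => (x i, y i)) :=
  fun i => Prod.ext (hx i) (hy i)

theorem exists_pos_forall_dist_lt_mem_of_mem_nhdsSet_diagonal {X : Type*} [PseudoMetricSpace X]
    [CompactSpace X] {U : Set (X × X)} (hU : U ∈ 𝓝ˢ (diagonal X)) :
    ∃ ε > 0, ∀ x y : X, dist x y < ε → (x, y) ∈ U := by
  rw [nhdsSet_diagonal_eq_uniformity] at hU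
  exact Metric.mem_uniformity_dist.mp hU

theorem exists_pos_lt_dist_zpow_of_invSet_prodMap_subset_diagSet {X : Type*}
    [PseudoMetricSpace X] [CompactSpace X] (e : Equiv.Perm X) {U : Set (X × X)}
    (hU : U ∈ 𝓝ˢ (diagonal X)) (hInv : InvSet (Prod.map e e) U ⊆ diagSet X) :
    ∃ ρ > 0, ∀ x y : X, x ≠ y → ∃ n : ℤ, ρ < dist ((e ^ n) x) ((e ^ n) y) := by
  obtain ⟨ε, hε, hεU⟩ := exists_pos_forall_dist_lt_mem_of_mem_nhdsSet_diagonal hU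
  refine ⟨ε / 2, half_pos hε, fun x y hxy => ?_⟩
  by_contra! hclose
  have hmem : (x, y) ∈ InvSet (Prod.map e e) U :=
    ⟨_, (isOrbit_zpow_apply e x).prodMap (isOrbit_zpow_apply e y), by simp,
      fun n => hεU _ _ ((hclose n).trans_lt (half_lt_self hε))⟩
  exact hxy (hInv hmem)

theorem stmt4 {X : Type*} [MetricSpace X] [CompactSpace X] (f : X ≃ₜ X)
    (h : ∃ I : Set (X × X), IsCompact I ∧
      InvSet (Prod.map f f) I = diagSet X ∧ diagSet X ⊆ interior I) :
    ∃ ρ > 0, ∀ x y : X, x ≠ y →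
      ∃ n : ℤ, ρ < dist ((f.toEquiv ^ n) x) ((f.toEquiv ^ n) y) := by
  obtain ⟨I, -, hInv, hdiag⟩ := h
  exact exists_pos_lt_dist_zpow_of_invSet_prodMap_subset_diagSet f.toEquiv
    (subset_interior_iff_mem_nhdsSet.mp hdiag) hInv.subset
end

section
/- Let f : X → X be continuous on a compact metric space and let 𝒫 = {(N_a, L_a) : a ∈ 𝒜} be an index system. Then the invariant set Inv(𝒫), defined as the union over all bi-infinite allowable sequences (aᵢ) of the sets of points whose orbit follows (cl(N_{aᵢ} \ L_{aᵢ})), is a compact set satisfying f(Inv 𝒫) = Inv 𝒫. -/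
/-!
`Inv 𝒫` is the image, under `(a, x) ↦ x 0`, of the set of pairs of an allowable sequence `a` and
an orbit `x` following it. Giving the finite symbol set the discrete topology, this set is closed
in the compact space `(ℤ → A) × (ℤ → X)`, hence compact, and so is its image. Invariance under `f`
is the shift of the index: `f` moves the base point of a pair one step along the orbit.
-/

open Set

/-- An index system for `f : X → X`, indexed by a (finite) symbol set `A`. -/
structure IndexSystem (X : Type*) [TopologicalSpace X] (f : X → X) (A : Type*) where
  N : A → Set X
  L : A → Set X
  compactN : ∀ a, IsCompact (N a)
  compactL : ∀ a, IsCompact (L a)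
  subset : ∀ a, L a ⊆ N a
  precedes : A → A → Prop
  /-- If `a` precedes `b`, `L a` is a neighborhood in `N a` of `{x ∈ N a | f x ∉ int (N b)}`. -/
  precedes_nhds : ∀ a b, precedes a b → ∀ x ∈ N a, f x ∉ interior (N b) → L a ∈ nhdsWithin x (N a)
  /-- If `a` precedes `b`, then `f (L a) ∩ cl (N b \ L b) = ∅`. -/
  precedes_disj : ∀ a b, precedes a b → (f '' L a) ∩ closure (N b \ L b) = ∅
  /-- Each pair precedes at least one pair. -/
  exists_succ : ∀ a, ∃ b, precedes a b
  /-- Every allowable sequence of the sets `cl (N a \ L a)` is an isolating neighborhood chain. -/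
  chain : ∀ a : ℤ → A, (∀ i, precedes (a i) (a (i + 1))) →
    ∀ x : ℤ → X, (∀ i, f (x i) = x (i + 1)) →
      (∀ i, x i ∈ closure (N (a i) \ L (a i))) →
        ∀ i, x i ∈ interior (closure (N (a i) \ L (a i)))

/-- The invariant set of an index system: points on orbits following an allowable sequence. -/
def IndexSystem.Inv {X : Type*} [TopologicalSpace X] {f : X → X} {A : Type*}
    (P : IndexSystem X f A) : Set X :=
  {p | ∃ a : ℤ → A, (∀ i, P.precedes (a i) (a (i + 1))) ∧
    ∃ x : ℤ → X, (∀ i, f (x i) = x (i + 1)) ∧ x 0 = p ∧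
      ∀ i, x i ∈ closure (P.N (a i) \ P.L (a i))}

theorem isClosed_setOf_snd_mem_of_discrete {A Y : Type*} [TopologicalSpace A]
    [DiscreteTopology A] [TopologicalSpace Y] {C : A → Set Y} (hC : ∀ a, IsClosed (C a)) :
    IsClosed {p : A × Y | p.2 ∈ C p.1} := by
  refine isOpen_compl_iff.mp (isOpen_iff_mem_nhds.mpr fun p hp => ?_)
  have hnhds : {p.1} ×ˢ (C p.1)ᶜ ∈ nhds p :=
    prod_mem_nhds (isOpen_discrete _ |>.mem_nhds rfl) ((hC p.1).isOpen_compl.mem_nhds hp)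
  filter_upwards [hnhds] with q ⟨hq₁, hq₂⟩
  rw [mem_singleton_iff] at hq₁
  rwa [mem_compl_iff, mem_ofPred_eq, hq₁]

namespace IndexSystem

variable {X : Type*} [TopologicalSpace X] {f : X → X} {A : Type*} (P : IndexSystem X f A)

def allowableOrbits : Set ((ℤ → A) × (ℤ → X)) :=
  {p | (∀ i, P.precedes (p.1 i) (p.1 (i + 1))) ∧ (∀ i, f (p.2 i) = p.2 (i + 1)) ∧
    ∀ i, p.2 i ∈ closure (P.N (p.1 i) \ P.L (p.1 i))}

theorem Inv_eq_image_allowableOrbits : P.Inv = (fun p => p.2 0) '' P.allowableOrbits := by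
  ext y
  constructor
  · rintro ⟨a, ha, x, hx, rfl, hmem⟩
    exact ⟨(a, x), ⟨ha, hx, hmem⟩, rfl⟩
  · rintro ⟨⟨a, x⟩, ⟨ha, hx, hmem⟩, rfl⟩
    exact ⟨a, ha, x, hx, rfl, hmem⟩

theorem isClosed_allowableOrbits [TopologicalSpace A] [DiscreteTopology A] [T2Space X]
    (hf : Continuous f) : IsClosed P.allowableOrbits := by
  have hprec (i : ℤ) : IsClosed {p : (ℤ → A) × (ℤ → X) | P.precedes (p.1 i) (p.1 (i + 1))} :=
    (isClosed_discrete {q : A × A | P.precedes q.1 q.2}).preimage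
      (f := fun p : (ℤ → A) × (ℤ → X) => (p.1 i, p.1 (i + 1))) (by fun_prop)
  have horbit (i : ℤ) : IsClosed {p : (ℤ → A) × (ℤ → X) | f (p.2 i) = p.2 (i + 1)} :=
    isClosed_eq (by fun_prop) (by fun_prop)
  have hmem (i : ℤ) :
      IsClosed {p : (ℤ → A) × (ℤ → X) | p.2 i ∈ closure (P.N (p.1 i) \ P.L (p.1 i))} :=
    (isClosed_setOf_snd_mem_of_discrete (C := fun a => closure (P.N a \ P.L a))
      fun _ => isClosed_closure).preimage
      (f := fun p : (ℤ → A) × (ℤ → X) => (p.1 i, p.2 i)) (by fun_prop)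
  simp only [allowableOrbits, ofPred_and, ofPred_forall]
  exact (isClosed_iInter hprec).inter ((isClosed_iInter horbit).inter (isClosed_iInter hmem))

theorem isCompact_Inv [Finite A] [CompactSpace X] [T2Space X] (hf : Continuous f) :
    IsCompact P.Inv := by
  let _ : TopologicalSpace A := ⊥
  have : DiscreteTopology A := ⟨rfl⟩
  rw [Inv_eq_image_allowableOrbits]
  exact (P.isClosed_allowableOrbits hf).isCompact.image (by fun_prop)

theorem image_Inv : f '' P.Inv = P.Inv := by
  ext y
  constructor
  · rintro ⟨_, ⟨a, ha, x, hx, rfl, hmem⟩, rfl⟩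
    exact ⟨fun i => a (i + 1), fun i => ha (i + 1), fun i => x (i + 1), fun i => hx (i + 1),
      (hx 0).symm, fun i => hmem (i + 1)⟩
  · rintro ⟨a, ha, x, hx, rfl, hmem⟩
    refine ⟨x (-1), ⟨fun i => a (i - 1), fun i => ?_, fun i => x (i - 1), fun i => ?_, rfl,
      fun i => hmem (i - 1)⟩, hx (-1)⟩
    · simpa using ha (i - 1)
    · simpa using hx (i - 1)

end IndexSystem

theorem stmt9 {X : Type*} [MetricSpace X] [CompactSpace X] {f : X → X}
    (hf : Continuous f) {A : Type*} [Finite A] (P : IndexSystem X f A) :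
    IsCompact P.Inv ∧ f '' P.Inv = P.Inv :=
  ⟨P.isCompact_Inv hf, P.image_Inv⟩
end

section
/- Every isolated invariant set S for a continuous map f : X → X on a compact metric space admits an index pair (N, L); in particular, for any neighborhood U of S there exists an index pair with N \ L ⊆ U. -/
/-!
Shrink the isolating neighbourhood to `N`, the regularized set of points whose first `n` iterates
lie in thickenings of `S` of strictly decreasing radii, where `n` is a time after which every
forward orbit trapped in `I` has come close to `S`. Such an `n` exists by compactness, because
`⋂ₙ fⁿ(Inv⁺ I) = Inv I = S`, where `Inv⁺ I` is the set of points whose forward orbit stays in `I`.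
Then `f` maps `Inv⁺ N` into `int N`, so the exit set of `N` is a compact set disjoint from
`Inv⁺ N`, and its points leave `N` within a bounded time. Thickening the finitely many forward
images of the exit set, from the last one backwards, yields an open `O` around the exit set with
`f(cl O) ⊆ O ∪ Nᶜ` and `cl O ∩ Inv⁺ N = ∅`; take `L = cl(O ∩ int N)`.
-/

open Set

section

open Function Metric Topology

variable {X : Type*}

def posInvSet (f : X → X) (N : Set X) : Set X := {x | ∀ n : ℕ, f^[n] x ∈ N}

def orbitTube (f : X → X) (m : ℕ) (V : ℕ → Set X) : Set X :=
  {x | ∀ k ≤ m, f^[k] x ∈ V k}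

def twoSidedOrbit (f g : X → X) (p : X) : ℤ → X
  | Int.ofNat n => f^[n] p
  | Int.negSucc n => g^[n + 1] p

section Orbits

variable {f : X → X}

theorem IsOrbit.iterate_apply {x : ℤ → X} (hx : IsOrbit f x) (i : ℤ) (k : ℕ) :
    f^[k] (x i) = x (i + k) := by
  induction k with
  | zero => simp
  | succ k ih => rw [iterate_succ_apply', ih, hx, Nat.cast_succ, add_assoc]

theorem IsOrbit.mem_invSet {x : ℤ → X} {I : Set X} (hx : IsOrbit f x) (hI : ∀ i, x i ∈ I)
    (j : ℤ) : x j ∈ InvSet f I :=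
  ⟨fun i => x (i + j), fun i => by rw [hx, add_right_comm], congrArg x (zero_add j),
    fun i => hI _⟩

theorem invSet_mono {I J : Set X} (h : I ⊆ J) : InvSet f I ⊆ InvSet f J :=
  fun _ ⟨x, hx, h0, hI⟩ => ⟨x, hx, h0, fun i => h (hI i)⟩

theorem mapsTo_invSet (I : Set X) : MapsTo f (InvSet f I) (InvSet f I) := by
  rintro _ ⟨x, hx, rfl, hI⟩
  rw [hx 0]
  exact hx.mem_invSet hI _

theorem surjOn_invSet (I : Set X) : SurjOn f (InvSet f I) (InvSet f I) := by
  rintro _ ⟨x, hx, rfl, hI⟩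
  exact ⟨x (-1), hx.mem_invSet hI _, hx (-1)⟩

theorem isOrbit_twoSidedOrbit {g : X → X} {Q : Set X} (hg : RightInvOn g f Q)
    (hgQ : MapsTo g Q Q) {p : X} (hp : p ∈ Q) : IsOrbit f (twoSidedOrbit f g p) := by
  rintro (n | _ | n)
  · exact (iterate_succ_apply' f n p).symm
  · exact hg hp
  · show f (g^[n + 2] p) = g^[n + 1] p
    rw [iterate_succ_apply']
    exact hg (hgQ.iterate (n + 1) hp)

theorem subset_invSet_of_surjOn {Q : Set X} (hmaps : MapsTo f Q Q) (hsurj : SurjOn f Q Q) :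
    Q ⊆ InvSet f Q := by
  intro p hp
  have : Nonempty X := ⟨p⟩
  refine ⟨twoSidedOrbit f (invFunOn f Q) p,
    isOrbit_twoSidedOrbit hsurj.rightInvOn_invFunOn hsurj.mapsTo_invFunOn hp, rfl, ?_⟩
  rintro (n | n)
  · exact hmaps.iterate n hp
  · exact hsurj.mapsTo_invFunOn.iterate (n + 1) hp

theorem posInvSet_subset (N : Set X) : posInvSet f N ⊆ N := fun _ hx => hx 0

theorem mapsTo_posInvSet (N : Set X) : MapsTo f (posInvSet f N) (posInvSet f N) :=
  fun x hx n => by rw [← iterate_succ_apply]; exact hx (n + 1)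

theorem antitone_image_iterate {P : Set X} (hP : MapsTo f P P) :
    Antitone fun n => f^[n] '' P :=
  antitone_nat_of_succ_le fun n => by
    rw [iterate_succ, image_comp]
    exact image_mono hP.image_subset

theorem orbitTube_mono {m : ℕ} {V V' : ℕ → Set X} (h : ∀ k, V k ⊆ V' k) :
    orbitTube f m V ⊆ orbitTube f m V' :=
  fun _ hx k hk => h k (hx k hk)

theorem apply_mem_orbitTube {m : ℕ} {V V' : ℕ → Set X} (hV : ∀ k < m, V (k + 1) ⊆ V' k)
    {x : X} (hx : x ∈ orbitTube f m V) (hm : f^[m + 1] x ∈ V' m) :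
    f x ∈ orbitTube f m V' := by
  intro k hk
  rw [← iterate_succ_apply]
  rcases hk.lt_or_eq with hk | rfl
  · exact hV k hk (hx (k + 1) hk)
  · exact hm

theorem orbitTube_eq_biInter (m : ℕ) (V : ℕ → Set X) :
    orbitTube f m V = ⋂ k ∈ Iic m, f^[k] ⁻¹' V k := by
  ext; simp [orbitTube]

variable [TopologicalSpace X]

theorem isClosed_posInvSet (hf : Continuous f) {N : Set X} (hN : IsClosed N) :
    IsClosed (posInvSet f N) := by
  have : posInvSet f N = ⋂ n : ℕ, f^[n] ⁻¹' N := by ext; simp [posInvSet]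
  rw [this]
  exact isClosed_iInter fun n => hN.preimage (hf.iterate n)

theorem isOpen_orbitTube (hf : Continuous f) {m : ℕ} {V : ℕ → Set X}
    (hV : ∀ k, IsOpen (V k)) :
    IsOpen (orbitTube f m V) := by
  rw [orbitTube_eq_biInter]
  exact (finite_Iic m).isOpen_biInter fun k _ => (hV k).preimage (hf.iterate k)

theorem isClosed_orbitTube (hf : Continuous f) {m : ℕ} {V : ℕ → Set X}
    (hV : ∀ k, IsClosed (V k)) : IsClosed (orbitTube f m V) := by
  rw [orbitTube_eq_biInter]
  exact isClosed_biInter fun k _ => (hV k).preimage (hf.iterate k)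

end Orbits

section CompactDynamics

variable [TopologicalSpace X] [CompactSpace X] [T2Space X] {f : X → X}

theorem iInter_image_iterate_subset_invSet (hf : Continuous f) {P : Set X} (hP : IsClosed P)
    (hPf : MapsTo f P P) : ⋂ n : ℕ, f^[n] '' P ⊆ InvSet f P := by
  set Q := ⋂ n : ℕ, f^[n] '' P
  have hcpt : ∀ n, IsCompact (f^[n] '' P) := fun n => hP.isCompact.image (hf.iterate n)
  have hmaps : MapsTo f Q Q := by
    refine fun p hp => mem_iInter.2 fun n => ?_
    obtain ⟨a, ha, rfl⟩ := mem_iInter.1 hp n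
    exact ⟨f a, hPf ha, by rw [← iterate_succ_apply, iterate_succ_apply']⟩
  -- a preimage of `p` in `Q` is found in the nested compact sets `f⁻¹{p} ∩ fⁿ(P)`
  have hsurj : SurjOn f Q Q := by
    intro p hp
    have hcl : ∀ n, IsClosed (f ⁻¹' {p} ∩ f^[n] '' P) :=
      fun n => (isClosed_singleton.preimage hf).inter (hcpt n).isClosed
    obtain ⟨q, hq⟩ := IsCompact.nonempty_iInter_of_sequence_nonempty_isCompact_isClosed _
      (fun n => inter_subset_inter_right _ (antitone_image_iterate hPf n.le_succ))
      (fun n => by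
        obtain ⟨a, ha, hap⟩ := mem_iInter.1 hp (n + 1)
        refine ⟨f^[n] a, ?_, a, ha, rfl⟩
        rw [mem_preimage, ← iterate_succ_apply' f n a, hap]
        rfl)
      (hcl 0).isCompact hcl
    simp only [mem_iInter, mem_inter_iff, mem_preimage, mem_singleton_iff] at hq
    exact ⟨q, mem_iInter.2 fun n => (hq n).2, (hq 0).1⟩
  have hQP : Q ⊆ P := by simpa using iInter_subset (fun n : ℕ => f^[n] '' P) 0
  exact (subset_invSet_of_surjOn hmaps hsurj).trans (invSet_mono hQP)

theorem invSet_eq_iInter_image_posInvSet (hf : Continuous f) {I : Set X} (hI : IsClosed I) :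
    InvSet f I = ⋂ n : ℕ, f^[n] '' posInvSet f I := by
  refine Subset.antisymm ?_ ((iInter_image_iterate_subset_invSet hf (isClosed_posInvSet hf hI)
    (mapsTo_posInvSet I)).trans (invSet_mono (posInvSet_subset I)))
  rintro _ ⟨x, hx, rfl, hxI⟩
  refine mem_iInter.2 fun n => ⟨x (-n), fun k => ?_, ?_⟩
  · rw [hx.iterate_apply]
    exact hxI _
  · rw [hx.iterate_apply, neg_add_cancel]

theorem isCompact_invSet (hf : Continuous f) {I : Set X} (hI : IsClosed I) :
    IsCompact (InvSet f I) := by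
  rw [invSet_eq_iInter_image_posInvSet hf hI]
  exact (isClosed_iInter fun n =>
    ((isClosed_posInvSet hf hI).isCompact.image (hf.iterate n)).isClosed).isCompact

theorem exists_image_iterate_posInvSet_subset (hf : Continuous f) {I W : Set X}
    (hI : IsClosed I) (hW : IsOpen W) (hIW : InvSet f I ⊆ W) :
    ∃ n, f^[n] '' posInvSet f I ⊆ W :=
  exists_subset_nhds_of_isCompact (antitone_image_iterate (mapsTo_posInvSet I)).directed_ge
    (fun n => (isClosed_posInvSet hf hI).isCompact.image (hf.iterate n))
    (fun _ hx => hW.mem_nhds (hIW (by rwa [invSet_eq_iInter_image_posInvSet hf hI])))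

end CompactDynamics

theorem exists_nbhd_mapsTo_posInvSet_interior [MetricSpace X] [CompactSpace X] {f : X → X}
    (hf : Continuous f) {I G : Set X} (hI : IsClosed I) (hG : IsOpen G) (hGI : G ⊆ I)
    (hIG : InvSet f I ⊆ G) :
    ∃ N, IsCompact N ∧ N = closure (interior N) ∧ InvSet f I ⊆ interior N ∧ N ⊆ G ∧
      MapsTo f (posInvSet f N) (interior N) := by
  set S := InvSet f I
  obtain ⟨δ, hδ, hδG⟩ := (isCompact_invSet hf hI).exists_cthickening_subset_open hG hIG
  obtain ⟨n, hn⟩ := exists_image_iterate_posInvSet_subset hf hI isOpen_thickening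
    (self_subset_thickening (half_pos hδ) S)
  set r : ℕ → ℝ := fun k => δ / 2 + δ / 2 ^ (k + 1)
  have hr_gt : ∀ k, δ / 2 < r k := fun k => lt_add_of_pos_right _ (by positivity)
  have hr_pos : ∀ k, 0 < r k := fun k => (half_pos hδ).trans (hr_gt k)
  have hr_anti : ∀ k, r (k + 1) < r k := fun k =>
    add_lt_add_right (div_lt_div_of_pos_left hδ (by positivity)
      (pow_lt_pow_right₀ one_lt_two (Nat.lt_succ_self _))) _
  set N₀ := orbitTube f n fun k => cthickening (r k) S
  set Ω := orbitTube f n fun k => thickening (r k) S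
  have hΩ : IsOpen Ω := isOpen_orbitTube hf fun _ => isOpen_thickening
  have hΩN : Ω ⊆ interior (closure (interior N₀)) := hΩ.subset_interior_iff.2
    ((interior_maximal (orbitTube_mono fun _ => thickening_subset_cthickening _ _) hΩ).trans
      subset_closure)
  have hN₀ : closure (interior N₀) ⊆ N₀ :=
    (isClosed_orbitTube hf fun _ => isClosed_cthickening).closure_interior_subset
  have hN₀G : N₀ ⊆ G := fun x hx => hδG (by simpa [r] using hx 0 (Nat.zero_le n))
  refine ⟨closure (interior N₀), isClosed_closure.isCompact, closure_interior_idem.symm,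
    fun p hp => hΩN fun k _ => self_subset_thickening (hr_pos k) S
      ((mapsTo_invSet I).iterate k hp), hN₀.trans hN₀G, fun x hx => hΩN ?_⟩
  -- the radii shrink along the tube, and the last slot is filled because `n` is an absorption time
  have hxI : x ∈ posInvSet f I := fun k => hGI (hN₀G (hN₀ (hx k)))
  refine apply_mem_orbitTube (fun k _ => cthickening_subset_thickening' (hr_pos k) (hr_anti k) S)
    (hN₀ (hx 0)) (thickening_mono (hr_gt n).le S (hn ⟨f x, mapsTo_posInvSet I hxI, ?_⟩))
  exact (iterate_succ_apply f n x).symm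

theorem exists_isOpen_mapsTo_closure [TopologicalSpace X] [RegularSpace X] {f : X → X}
    (hf : Continuous f) {V W : Set X} (hV : IsOpen V) (hW : IsOpen W) {D : ℕ → Set X}
    (hD : ∀ j, IsCompact (D j)) (hDV : ∀ j, D j ⊆ V)
    (hDf : ∀ j, MapsTo f (D j) (D (j + 1) ∪ W))
    {m : ℕ} (hm : D m = ∅) :
    ∃ O, IsOpen O ∧ D 0 ⊆ O ∧ closure O ⊆ V ∧ MapsTo f (closure O) (O ∪ W) := by
  induction m generalizing D with
  | zero => exact ⟨∅, isOpen_empty, hm.subset, by simp, by simp [mapsTo_empty]⟩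
  | succ m ih =>
    obtain ⟨O, hO, hDO, hOV, hOf⟩ := ih (fun j => hD _) (fun j => hDV _) (fun j => hDf _) hm
    have hΘ : V ∩ f ⁻¹' (O ∪ W) ∈ 𝓝ˢ (D 0) :=
      (hV.inter ((hO.union hW).preimage hf)).mem_nhdsSet.2
        fun x hx => ⟨hDV 0 hx, (hDf 0 hx).imp_left (@hDO _)⟩
    obtain ⟨P, hP, hDP, hPΘ⟩ := (hD 0).exists_isOpen_closure_subset hΘ
    refine ⟨P ∪ O, hP.union hO, hDP.trans subset_union_left, ?_, ?_⟩ <;> rw [closure_union]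
    · exact union_subset (hPΘ.trans inter_subset_left) hOV
    · rintro x (hx | hx)
      · exact (hPΘ hx).2.imp_left Or.inr
      · exact (hOf hx).imp_left Or.inr

theorem exists_isOpen_exitSet_subset [TopologicalSpace X] [CompactSpace X] [T2Space X]
    {f : X → X} (hf : Continuous f) {N : Set X} (hN : IsClosed N)
    (htrap : MapsTo f (posInvSet f N) (interior N)) :
    ∃ O, IsOpen O ∧ N ∩ f ⁻¹' (interior N)ᶜ ⊆ O ∧ closure O ⊆ (posInvSet f N)ᶜ ∧
      MapsTo f (closure O) (O ∪ Nᶜ) := by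
  set E := N ∩ f ⁻¹' (interior N)ᶜ
  have hE : IsClosed E := hN.inter (isOpen_interior.isClosed_compl.preimage hf)
  have hET : ∀ x ∈ E, x ∉ posInvSet f N := fun x hx hxT => hx.2 (htrap hxT)
  set G : ℕ → Set X := fun j => E ∩ orbitTube f j fun _ => N
  have hG : ∀ j, IsClosed (G j) := fun j => hE.inter (isClosed_orbitTube hf fun _ => hN)
  have hG_anti : Antitone G := fun i j hij x hx => ⟨hx.1, fun k hk => hx.2 k (hk.trans hij)⟩
  obtain ⟨m, hm⟩ : ∃ m, G m ⊆ ∅ := exists_subset_nhds_of_isCompact hG_anti.directed_ge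
    (fun j => (hG j).isCompact)
    (fun x hx => absurd (fun n => (mem_iInter.1 hx n).2 n le_rfl) (hET x (mem_iInter.1 hx 0).1))
  have hDT : ∀ j, f^[j] '' G j ⊆ (posInvSet f N)ᶜ := by
    rintro j _ ⟨x, ⟨hxE, hxN⟩, rfl⟩ hy
    refine hET x hxE fun n => ?_
    rcases le_or_gt n j with h | h
    · exact hxN n h
    · obtain ⟨k, rfl⟩ := exists_add_of_le h.le
      rw [add_comm, iterate_add_apply]
      exact hy k
  have hDf : ∀ j, MapsTo f (f^[j] '' G j) (f^[j + 1] '' G (j + 1) ∪ Nᶜ) := by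
    rintro j _ ⟨x, ⟨hxE, hxN⟩, rfl⟩
    by_cases h : f (f^[j] x) ∈ N
    · refine Or.inl ⟨x, ⟨hxE, fun k hk => ?_⟩, iterate_succ_apply' f j x⟩
      rcases hk.lt_or_eq with hk | rfl
      · exact hxN k (Nat.lt_succ_iff.1 hk)
      · rwa [iterate_succ_apply']
    · exact Or.inr h
  have hEG : E ⊆ f^[0] '' G 0 := fun x hx =>
    ⟨x, ⟨hx, fun k hk => by rw [nonpos_iff_eq_zero.1 hk]; exact hx.1⟩, rfl⟩
  obtain ⟨O, hO, hEO, hOT, hOf⟩ := exists_isOpen_mapsTo_closure hf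
    (isClosed_posInvSet hf hN).isOpen_compl hN.isOpen_compl
    (fun j => (hG j).isCompact.image (hf.iterate j)) hDT hDf (m := m) (by simpa using hm)
  exact ⟨O, hO, hEG.trans hEO, hOT, hOf⟩

end

theorem stmt14 {X : Type*} [MetricSpace X] [CompactSpace X] {f : X → X}
    (hf : Continuous f) {S : Set X}
    -- `S` is an isolated invariant set
    (hSiso : ∃ I : Set X, IsCompact I ∧ InvSet f I = S ∧ S ⊆ interior I)
    -- `U` is a neighborhood of `S`
    {U : Set X} (hU : S ⊆ interior U) :
    ∃ N L : Set X, IsCompact N ∧ IsCompact L ∧ L ⊆ N ∧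
      N = closure (interior N) ∧ L = closure (interior L) ∧
      -- `cl(N \ L)` is an isolating neighborhood for `S`
      InvSet f (closure (N \ L)) = S ∧ S ⊆ interior (closure (N \ L)) ∧
      -- `L` is a neighborhood in `N` of the exit set
      (∀ x ∈ N, f x ∉ interior N → L ∈ nhdsWithin x N) ∧
      -- `f(L) ∩ cl(N \ L) = ∅`
      (f '' L) ∩ closure (N \ L) = ∅ ∧
      N \ L ⊆ U := by
  obtain ⟨I, hI, rfl, hSI⟩ := hSiso
  obtain ⟨N, hNc, hNreg, hSN, hNG, hNf⟩ := exists_nbhd_mapsTo_posInvSet_interior hf hI.isClosed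
    (isOpen_interior.inter isOpen_interior) (fun _ hx => interior_subset hx.1) (subset_inter hSI hU)
  obtain ⟨O, hO, hEO, hOT, hOf⟩ := exists_isOpen_exitSet_subset hf hNc.isClosed hNf
  have hST : InvSet f I ⊆ posInvSet f N :=
    fun p hp n => interior_subset (hSN ((mapsTo_invSet I).iterate n hp))
  set L := closure (O ∩ interior N)
  have hLO : L ⊆ closure O := closure_mono inter_subset_left
  have hON : O ∩ N ⊆ L := fun x hx => hO.inter_closure ⟨hx.1, hNreg ▸ hx.2⟩
  have hNLN : closure (N \ L) ⊆ N := closure_minimal sdiff_subset hNc.isClosed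
  have hNLO : closure (N \ L) ⊆ Oᶜ :=
    closure_minimal (fun x hx hxO => hx.2 (hON ⟨hxO, hx.1⟩)) hO.isClosed_compl
  have hSNL : InvSet f I ⊆ interior N ∩ (closure O)ᶜ :=
    fun p hp => ⟨hSN hp, fun h => hOT h (hST hp)⟩
  have hNL : interior N ∩ (closure O)ᶜ ⊆ N \ L :=
    fun x hx => ⟨interior_subset hx.1, fun h => hx.2 (hLO h)⟩
  refine ⟨N, L, hNc, isClosed_closure.isCompact, (closure_mono inter_subset_right).trans hNreg.ge,
    hNreg, ?_, ?_, ?_, ?_, ?_, fun x hx => interior_subset (hNG hx.1).2⟩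
  · simpa only [(hO.inter isOpen_interior).interior_eq] using
      (closure_interior_idem (s := O ∩ interior N)).symm
  · refine (invSet_mono (hNLN.trans fun x hx => interior_subset (hNG hx).1)).antisymm ?_
    exact (subset_invSet_of_surjOn (mapsTo_invSet I) (surjOn_invSet I)).trans
      (invSet_mono (hSNL.trans (hNL.trans subset_closure)))
  · exact hSNL.trans ((isOpen_interior.inter isClosed_closure.isOpen_compl).subset_interior_iff.2
      (hNL.trans subset_closure))
  · exact fun x hxN hfx => mem_nhdsWithin.2 ⟨O, hO, hEO ⟨hxN, hfx⟩, hON⟩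
  · refine eq_empty_iff_forall_notMem.2 ?_
    rintro _ ⟨⟨x, hxL, rfl⟩, hx⟩
    exact (hOf (hLO hxL)).elim (hNLO hx) fun h => h (hNLN hx)
end

section
/- Let f : ℝ → ℝ be the tent map f(x) = 3x for x ≤ 1/2 and f(x) = 3 − 3x for x ≥ 1/2, and let ε > 0 be sufficiently small. Then the pair (N₀, L₀) with N₀ = [−4ε, 1+4ε] and L₀ = [−4ε, −ε] ∪ [1/3+ε, 2/3−ε] ∪ [1+ε, 1+4ε] is an index pair for the invariant set Inv([−ε, 1+ε]): cl(N₀ \ L₀) is an isolating neighborhood, L₀ is a neighborhood in N₀ of the exit set {x ∈ N₀ : f(x) ∉ int N₀}, and f(L₀) ∩ cl(N₀ \ L₀) = ∅. -/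
open Set

/-- The tent map with slope 3. -/
noncomputable def tent : ℝ → ℝ := fun x => if x ≤ 1 / 2 then 3 * x else 3 - 3 * x

/-!
Points of `[-ε, 1 + ε]` whose image stays in `[-ε, 1 + ε]` avoid the endpoints and the middle
gap `[1/3 + ε, 2/3 - ε]`, since the tent map sends all of these out of `[-ε, 1 + ε]`. Hence
`Inv([-ε, 1 + ε])` lies in the open set `N₀ \ L₀ = (-ε, 1/3 + ε) ∪ (2/3 - ε, 1 + ε)`, which
gives the isolation properties; the exit and disjointness conditions are elementary estimates
on the two linear branches.
-/

open Filter Topology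

theorem InvSet.subset_inter_preimage {X : Type*} (f : X → X) (I : Set X) :
    InvSet f I ⊆ I ∩ f ⁻¹' I := by
  rintro _ ⟨x, hx, rfl, hxI⟩
  exact ⟨hxI 0, by rw [mem_preimage, hx 0]; exact hxI (0 + 1)⟩

theorem InvSet.eq_of_inter_preimage_subset {X : Type*} {f : X → X} {I J : Set X} (hJI : J ⊆ I)
    (hIJ : I ∩ f ⁻¹' I ⊆ J) : InvSet f J = InvSet f I := by
  refine Subset.antisymm ?_ ?_
  · rintro p ⟨x, hx, hx0, hxJ⟩
    exact ⟨x, hx, hx0, fun i => hJI (hxJ i)⟩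
  · rintro p ⟨x, hx, hx0, hxI⟩
    refine ⟨x, hx, hx0, fun i => hIJ ⟨hxI i, ?_⟩⟩
    rw [mem_preimage, hx i]
    exact hxI (i + 1)

section Tent

variable {ε x : ℝ}

theorem tent_of_le (hx : x ≤ 1 / 2) : tent x = 3 * x := if_pos hx

theorem tent_of_gt (hx : 1 / 2 < x) : tent x = 3 - 3 * x := if_neg hx.not_ge

theorem tent_notMem_Icc (hε : 0 < ε)
    (hx : x ≤ -ε ∨ x ∈ Icc (1 / 3 + ε) (2 / 3 - ε) ∨ 1 + ε ≤ x) :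
    tent x ∉ Icc (-ε) (1 + ε) := by
  rintro ⟨h₁, h₂⟩
  rcases le_or_gt x (1 / 2) with hx₂ | hx₂
  · rw [tent_of_le hx₂] at h₁ h₂
    rcases hx with hx | ⟨hx, -⟩ | hx <;> linarith
  · rw [tent_of_gt hx₂] at h₁ h₂
    rcases hx with hx | ⟨-, hx⟩ | hx <;> linarith

theorem mem_Ioo_union_Ioo_of_tent_mem (hε : 0 < ε) (hx : x ∈ Icc (-ε) (1 + ε))
    (htx : tent x ∈ Icc (-ε) (1 + ε)) :
    x ∈ Ioo (-ε) (1 / 3 + ε) ∪ Ioo (2 / 3 - ε) (1 + ε) := by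
  by_contra hU
  refine tent_notMem_Icc hε ?_ htx
  simp only [mem_union, mem_Ioo, not_or, not_and, not_lt] at hU
  rcases hx.1.eq_or_lt with h | h
  · exact Or.inl h.ge
  · rcases le_or_gt x (2 / 3 - ε) with h' | h'
    · exact Or.inr (Or.inl ⟨hU.1 h, h'⟩)
    · exact Or.inr (Or.inr (hU.2 h'))

theorem mem_exit_region_of_tent_notMem_Ioo (hε : 0 < ε)
    (h : tent x ∉ Ioo (-4 * ε) (1 + 4 * ε)) :
    x ∈ Iio (-ε) ∪ Ioo (1 / 3 + ε) (2 / 3 - ε) ∪ Ioi (1 + ε) := by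
  simp only [mem_union, mem_Iio, mem_Ioo, mem_Ioi]
  rw [mem_Ioo, not_and_or, not_lt, not_lt] at h
  rcases le_or_gt x (1 / 2) with hx | hx
  · rw [tent_of_le hx] at h
    rcases h with h | h
    · exact Or.inl (Or.inl (by linarith))
    · exact Or.inl (Or.inr ⟨by linarith, by linarith⟩)
  · rw [tent_of_gt hx] at h
    rcases h with h | h
    · exact Or.inr (by linarith)
    · exact Or.inl (Or.inr ⟨by linarith, by linarith⟩)

theorem exit_set_mem_nhdsWithin (hε : 0 < ε) (hx : tent x ∉ Ioo (-4 * ε) (1 + 4 * ε)) :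
    Icc (-4 * ε) (-ε) ∪ Icc (1 / 3 + ε) (2 / 3 - ε) ∪ Icc (1 + ε) (1 + 4 * ε) ∈
      𝓝[Icc (-4 * ε) (1 + 4 * ε)] x := by
  refine mem_nhdsWithin.mpr ⟨_, (isOpen_Iio.union isOpen_Ioo).union isOpen_Ioi,
    mem_exit_region_of_tent_notMem_Ioo hε hx, ?_⟩
  rintro y ⟨(hy | hy) | hy, hyN⟩
  · exact Or.inl (Or.inl ⟨hyN.1, hy.le⟩)
  · exact Or.inl (Or.inr (Ioo_subset_Icc_self hy))
  · exact Or.inr ⟨hy.le, hyN.2⟩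

end Tent

theorem Icc_diff_exit_set {ε : ℝ} (hε : 0 ≤ ε) :
    Icc (-4 * ε) (1 + 4 * ε) \
        (Icc (-4 * ε) (-ε) ∪ Icc (1 / 3 + ε) (2 / 3 - ε) ∪ Icc (1 + ε) (1 + 4 * ε)) =
      Ioo (-ε) (1 / 3 + ε) ∪ Ioo (2 / 3 - ε) (1 + ε) := by
  ext x
  simp only [Set.mem_sdiff, mem_union, mem_Icc, mem_Ioo]
  grind

theorem stmt15 :
    ∃ ε₀ > (0 : ℝ), ∀ ε : ℝ, 0 < ε → ε ≤ ε₀ →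
      (let N₀ : Set ℝ := Icc (-4 * ε) (1 + 4 * ε)
       let L₀ : Set ℝ := Icc (-4 * ε) (-ε) ∪ Icc (1 / 3 + ε) (2 / 3 - ε) ∪
         Icc (1 + ε) (1 + 4 * ε)
       -- `cl(N₀ \ L₀)` is an isolating neighborhood for `Inv([-ε, 1+ε])`
       InvSet tent (closure (N₀ \ L₀)) = InvSet tent (Icc (-ε) (1 + ε)) ∧
       InvSet tent (Icc (-ε) (1 + ε)) ⊆ interior (closure (N₀ \ L₀)) ∧
       -- `L₀` is a neighborhood in `N₀` of the exit set
       (∀ x ∈ N₀, tent x ∉ interior N₀ → L₀ ∈ nhdsWithin x N₀) ∧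
       -- `tent(L₀) ∩ cl(N₀ \ L₀) = ∅`
       (tent '' L₀) ∩ closure (N₀ \ L₀) = ∅) := by
  refine ⟨1, one_pos, fun ε hε _ => ?_⟩
  intro N₀ L₀
  have hU : N₀ \ L₀ = Ioo (-ε) (1 / 3 + ε) ∪ Ioo (2 / 3 - ε) (1 + ε) := Icc_diff_exit_set hε.le
  have hUopen : IsOpen (N₀ \ L₀) := hU ▸ isOpen_Ioo.union isOpen_Ioo
  have hUS : closure (N₀ \ L₀) ⊆ Icc (-ε) (1 + ε) := closure_minimal
    (hU ▸ union_subset (Ioo_subset_Icc_self.trans (Icc_subset_Icc le_rfl (by linarith)))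
      (Ioo_subset_Icc_self.trans (Icc_subset_Icc (by linarith) le_rfl))) isClosed_Icc
  have hSU : Icc (-ε) (1 + ε) ∩ tent ⁻¹' Icc (-ε) (1 + ε) ⊆ N₀ \ L₀ :=
    hU ▸ fun x ⟨hx, htx⟩ => mem_Ioo_union_Ioo_of_tent_mem hε hx htx
  refine ⟨InvSet.eq_of_inter_preimage_subset hUS (hSU.trans subset_closure),
    ((InvSet.subset_inter_preimage _ _).trans hSU).trans hUopen.subset_interior_closure,
    fun x _ hx => ?_, ?_⟩
  · rw [interior_Icc] at hx
    exact exit_set_mem_nhdsWithin hε hx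
  · refine eq_empty_iff_forall_notMem.mpr ?_
    rintro _ ⟨⟨z, hz, rfl⟩, hzU⟩
    refine tent_notMem_Icc hε ?_ (hUS hzU)
    rcases hz with (hz | hz) | hz
    exacts [Or.inl hz.2, Or.inr (Or.inl hz), Or.inr (Or.inr hz.1)]
end
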